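/- arXiv:1804.08068 — 7 statements merged into one kernel-verified Lean document; each statement's English description precedes it below -/
import Mathlib

section
/- Let b ≥ 2 be an integer and let a, c be integers with 1 ≤ a < c ≤ b. Let A = ⋃_{k≥0} [a·b^k, c·b^k) ∩ ℕ. If A is fractionally dense in ℝ_{>0}, then a²·b ≤ c². Equivalently, if c² < a²·b, then the quotient set R(A) is not dense in the positive reals. -/
/-- Theorem 1(2): if `A = ⋃ k, [a b^k, c b^k) ∩ ℕ` is fractionally dense
in the positive reals, then `a^2 * b ≤ c^2`. -/
theorem stmt_1 (a b c : ℕ) (hb : 2 ≤ b) (ha : 1 ≤ a) (hac : a < c) (hcb : c ≤ b)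
    (hdense : Set.Ioi (0 : ℝ) ⊆
      closure {q : ℝ |
        ∃ x ∈ {x : ℕ | ∃ k : ℕ, a * b ^ k ≤ x ∧ x < c * b ^ k},
        ∃ y ∈ {x : ℕ | ∃ k : ℕ, a * b ^ k ≤ x ∧ x < c * b ^ k},
          q = (x : ℝ) / (y : ℝ)}) :
    a ^ 2 * b ≤ c ^ 2 := by
  by_contra hcon
  push_neg at hcon
  -- real versions
  have hra : (0:ℝ) < a := by exact_mod_cast ha
  have hrc : (0:ℝ) < c := by exact_mod_cast Nat.lt_of_lt_of_le (by omega) (le_refl c)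
  have hrb : (0:ℝ) < b := by positivity
  have hlt : (c:ℝ)^2 < (a:ℝ)^2 * b := by exact_mod_cast hcon
  set α : ℝ := c / a with hα
  set β : ℝ := a * b / c with hβ
  have hαβ : α < β := by
    rw [hα, hβ, div_lt_div_iff₀ hra hrc]
    nlinarith
  -- no quotient lies in (α, β)
  have key : ∀ q ∈ {q : ℝ |
        ∃ x ∈ {x : ℕ | ∃ k : ℕ, a * b ^ k ≤ x ∧ x < c * b ^ k},
        ∃ y ∈ {x : ℕ | ∃ k : ℕ, a * b ^ k ≤ x ∧ x < c * b ^ k},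
          q = (x : ℝ) / (y : ℝ)}, q ≤ α ∨ β ≤ q := by
    rintro q ⟨x, ⟨j, hx1, hx2⟩, y, ⟨k, hy1, hy2⟩, rfl⟩
    have hy0 : 0 < y := lt_of_lt_of_le (by positivity) hy1
    have hry : (0:ℝ) < y := by exact_mod_cast hy0
    rcases le_or_gt j k with hjk | hkj
    · left
      have hn : x * a < c * y := by
        calc x * a < c * b ^ j * a := by
              exact mul_lt_mul_of_pos_right hx2 (by omega)
          _ = c * (a * b ^ j) := by ring
          _ ≤ c * (a * b ^ k) := by
              apply Nat.mul_le_mul_left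
              exact Nat.mul_le_mul_left a (Nat.pow_le_pow_right (by omega) hjk)
          _ ≤ c * y := Nat.mul_le_mul_left c hy1
      have hn' : (x:ℝ) * a < c * y := by exact_mod_cast hn
      rw [hα, div_le_div_iff₀ hry hra]
      linarith
    · right
      have hn : a * b * y < x * c := by
        calc a * b * y < a * b * (c * b ^ k) := by
              exact mul_lt_mul_of_pos_left hy2 (by positivity)
          _ = a * b ^ (k + 1) * c := by ring
          _ ≤ a * b ^ j * c := by
              apply Nat.mul_le_mul_right
              exact Nat.mul_le_mul_left a (Nat.pow_le_pow_right (by omega) hkj)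
          _ ≤ x * c := Nat.mul_le_mul_right c hx1
      have hn' : (a:ℝ) * b * y < x * c := by exact_mod_cast hn
      rw [hβ, div_le_div_iff₀ hrc hry]
      linarith
  -- midpoint of the gap
  set t : ℝ := (α + β) / 2 with ht
  have ht0 : t ∈ Set.Ioi (0:ℝ) := by
    have : (0:ℝ) < α := by positivity
    simp only [Set.mem_Ioi]
    rw [ht]; linarith
  have htc := hdense ht0
  rw [Metric.mem_closure_iff] at htc
  obtain ⟨q, hqS, hqd⟩ := htc ((β - α) / 2) (by linarith)
  rw [Real.dist_eq, abs_lt] at hqd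
  rcases key q hqS with h | h
  · rw [ht] at hqd; linarith
  · rw [ht] at hqd; linarith
end

section
/- Let U and V be subsets of ℕ such that the natural density d(U) exists and equals γ > 0. Then the set U/V = {u/v : u ∈ U, v ∈ V} is dense in ℝ_{>0} if and only if V is infinite. -/
/-!
If `V` is bounded by `M`, every nonzero ratio `u / v` is at least `1 / M`, so `U / V` misses an
interval `(0, c)`. Conversely, if `U` has density `γ > 0`, then for `0 < a < b` the counts of `U`
up to `a t` and `b t` are about `γ a t` and `γ b t`, so `U` meets `(a t, b t]` for all large `t`;
taking `t = v ∈ V` large puts a ratio `u / v` in `(a, b]`.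
-/

open Filter Topology Set

theorem tendsto_comp_natFloor_div_atTop {f : ℕ → ℝ} {γ : ℝ}
    (hf : Tendsto (fun n : ℕ => f n / n) atTop (𝓝 γ)) :
    Tendsto (fun s : ℝ => f ⌊s⌋₊ / s) atTop (𝓝 γ) := by
  have hprod : Tendsto (fun s : ℝ => f ⌊s⌋₊ / ⌊s⌋₊ * (⌊s⌋₊ / s)) atTop (𝓝 (γ * 1)) :=
    (hf.comp tendsto_nat_floor_atTop).mul tendsto_nat_floor_div_atTop
  rw [mul_one] at hprod
  refine hprod.congr' ?_
  filter_upwards [eventually_ge_atTop 1] with s hs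
  have hfloor : (⌊s⌋₊ : ℝ) ≠ 0 := Nat.cast_ne_zero.2 (Nat.floor_pos.2 hs).ne'
  field_simp

theorem eventually_lt_comp_natFloor_mul {f : ℕ → ℝ} {γ a b : ℝ}
    (hf : Tendsto (fun n : ℕ => f n / n) atTop (𝓝 γ)) (hγ : 0 < γ) (ha : 0 < a) (hab : a < b) :
    ∀ᶠ t : ℝ in atTop, f ⌊a * t⌋₊ < f ⌊b * t⌋₊ := by
  have hscaled : ∀ c : ℝ, 0 < c →
      Tendsto (fun t : ℝ => f ⌊c * t⌋₊ / t) atTop (𝓝 (c * γ)) := fun c hc =>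
    (((tendsto_comp_natFloor_div_atTop hf).comp (tendsto_id.const_mul_atTop hc)).const_mul c).congr
      fun t => by simp only [Function.comp_apply, id, ← mul_div_assoc, mul_div_mul_left _ _ hc.ne']
  have hlim : 0 < b * γ - a * γ := by nlinarith
  filter_upwards [((hscaled b (ha.trans hab)).sub (hscaled a ha)).eventually (lt_mem_nhds hlim),
    eventually_gt_atTop 0] with t hpos ht
  rw [← sub_div, div_pos_iff_of_pos_right ht] at hpos
  linarith

theorem exists_mem_Ioc_of_ncard_lt {U : Set ℕ} {m n : ℕ}
    (h : {u ∈ U | u ≤ m}.ncard < {u ∈ U | u ≤ n}.ncard) : ∃ u ∈ U, m < u ∧ u ≤ n := by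
  by_contra! hnone
  refine h.not_ge (ncard_le_ncard ?_ ((finite_Iic m).subset fun u hu => hu.2))
  rintro u ⟨hu, hun⟩
  exact ⟨hu, not_lt.1 fun hmu => (hnone u hu hmu).not_ge hun⟩

theorem eventually_exists_mem_Ioc_mul {U : Set ℕ} {γ a b : ℝ} (hγ : 0 < γ)
    (hU : Tendsto (fun n : ℕ => ({u ∈ U | u ≤ n}.ncard : ℝ) / n) atTop (𝓝 γ))
    (ha : 0 < a) (hab : a < b) :
    ∀ᶠ t : ℝ in atTop, ∃ u ∈ U, a * t < u ∧ u ≤ b * t := by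
  filter_upwards [eventually_lt_comp_natFloor_mul hU hγ ha hab, eventually_ge_atTop 0]
    with t hcount ht
  obtain ⟨u, hu, hau, hub⟩ := exists_mem_Ioc_of_ncard_lt (Nat.cast_lt.1 hcount)
  exact ⟨u, hu, (Nat.floor_lt (by positivity)).1 hau,
    (Nat.cast_le.2 hub).trans (Nat.floor_le (by nlinarith))⟩

/-- `U / V`, where a zero denominator contributes `u / 0 = 0`. -/
def ratioSet (U V : Set ℕ) : Set ℝ := {x | ∃ u ∈ U, ∃ v ∈ V, x = (u : ℝ) / (v : ℝ)}

theorem disjoint_ratioSet_Ioo {U V : Set ℕ} {M : ℕ} (hM : ∀ v ∈ V, v ≤ M) :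
    Disjoint (ratioSet U V) (Ioo 0 (1 / (M + 1))) := by
  rw [Set.disjoint_left]
  rintro _ ⟨u, -, v, hv, rfl⟩ ⟨hpos, hsmall⟩
  have hu : (1 : ℝ) ≤ u := by
    exact_mod_cast Nat.one_le_iff_ne_zero.2 fun h => by simp [h] at hpos
  have hv0 : (0 : ℝ) < v := by
    exact_mod_cast Nat.pos_of_ne_zero fun h => by simp [h] at hpos
  have hvM : (v : ℝ) ≤ M + 1 := by exact_mod_cast (hM v hv).trans M.le_succ
  refine hsmall.not_ge ?_
  calc 1 / ((M : ℝ) + 1) ≤ 1 / v := one_div_le_one_div_of_le hv0 hvM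
    _ ≤ u / v := by gcongr

theorem not_Ioi_subset_closure_ratioSet_of_finite {U V : Set ℕ} (hV : V.Finite) :
    ¬ Ioi (0 : ℝ) ⊆ closure (ratioSet U V) := by
  intro hdense
  obtain ⟨M, hM⟩ := hV.bddAbove
  have hdisj := (disjoint_ratioSet_Ioo (U := U) hM).closure_left isOpen_Ioo
  have hempty : Ioo (0 : ℝ) (1 / (M + 1)) = ∅ :=
    disjoint_self.1 (hdisj.mono_left (Ioo_subset_Ioi_self.trans hdense))
  exact (nonempty_Ioo.2 (by positivity)).ne_empty hempty

theorem Ioi_subset_closure_ratioSet_of_infinite {U V : Set ℕ} {γ : ℝ} (hγ : 0 < γ)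
    (hU : Tendsto (fun n : ℕ => ({u ∈ U | u ≤ n}.ncard : ℝ) / n) atTop (𝓝 γ))
    (hV : V.Infinite) : Ioi (0 : ℝ) ⊆ closure (ratioSet U V) := by
  intro x (hx : 0 < x)
  rw [mem_closure_iff_nhds_basis (nhds_basis_Ioo x)]
  rintro ⟨lo, hi⟩ ⟨hlo, hhi⟩
  -- Ratios in `(max lo (x / 2), x]` lie in `(lo, hi)`.
  have hmax : max lo (x / 2) < x := max_lt hlo (by linarith)
  have hwindow := eventually_exists_mem_Ioc_mul hγ hU (by positivity) hmax
  obtain ⟨v, hv, u, hu, hlow, hup⟩ :=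
    ((Nat.frequently_atTop_iff_infinite.2 hV).and_eventually
      (tendsto_natCast_atTop_atTop.eventually hwindow)).exists
  have hv0 : (0 : ℝ) < v := by nlinarith [hlow.trans_le hup]
  refine ⟨u / v, ⟨u, hu, v, hv, rfl⟩, ?_, ?_⟩
  · exact (le_max_left lo (x / 2)).trans_lt ((lt_div_iff₀ hv0).2 hlow)
  · exact ((div_le_iff₀ hv0).2 hup).trans_lt hhi

/-- Theorem 2: if `U ⊆ ℕ` has natural density `γ > 0` and `V ⊆ ℕ`, then
`U/V = {u/v : u ∈ U, v ∈ V}` is dense in the positive reals iff `V` is infinite. -/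
theorem stmt_3 (U V : Set ℕ) (γ : ℝ) (hγ : 0 < γ)
    (hU : Filter.Tendsto (fun n : ℕ => ({u ∈ U | u ≤ n}.ncard : ℝ) / n)
      Filter.atTop (nhds γ)) :
    (Set.Ioi (0 : ℝ) ⊆
        closure {x : ℝ | ∃ u ∈ U, ∃ v ∈ V, x = (u : ℝ) / (v : ℝ)}) ↔ V.Infinite :=
  ⟨fun hdense => not_not.1 fun hV => not_Ioi_subset_closure_ratioSet_of_finite
      (Set.not_infinite.1 hV) hdense,
    Ioi_subset_closure_ratioSet_of_infinite hγ hU⟩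
end

section
/- Let d > 0 be a squarefree integer and let 𝔞 be a nonzero ideal of ℤ[√−d]. Suppose 𝔞 = C ∪ D with C ∩ D = ∅. Then C is fractionally dense in ℂ or D is fractionally dense in ℂ; that is, at least one of the quotient sets R(C) = {x/y : x, y ∈ C, y ≠ 0} and R(D) = {x/y : x, y ∈ D, y ≠ 0} is dense in ℂ (under the embedding of ℤ[√−d] into ℂ sending a + b√−d to a + b√d·i). -/
/-!
If neither quotient set is dense, they miss nonempty open sets `U` and `V`. Then two nonzero
elements whose ratio lies in `U` are not both in `C`, and two whose ratio lies in `V` are not both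
in `D`. So for fractions `ρ ∈ U` and `σ ∈ V`, multiplying by `ρ` and then by `σ` sends `C` to `D`
and back to `C`, and so does dividing by both: once denominators are cleared, `ρσ` and `(ρσ)⁻¹`
preserve the colour `C`. Hence so does `σ'/σ` for fractions `σ, σ' ∈ V`, which covers every
fraction near `1`; as the fractions are dense, some power of such a fraction lands in `U`,
contradicting the choice of `U`. Scaling by a nonzero element of `𝔞` reduces the statement about
the ideal to the same statement about the whole ring.
-/

open Filter Topology

def quotientSet (S : Set ℂ) : Set ℂ := {z | ∃ x ∈ S, ∃ y ∈ S, y ≠ 0 ∧ z = x / y}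

lemma quotientSet_preimage_mul_subset {S : Set ℂ} {g : ℂ} (hg : g ≠ 0) :
    quotientSet ((· * g) ⁻¹' S) ⊆ quotientSet S := by
  rintro _ ⟨x, hx, y, hy, hy0, rfl⟩
  exact ⟨x * g, hx, y * g, hy, mul_ne_zero hy0 hg, (mul_div_mul_right x y hg).symm⟩

lemma dense_subfieldClosure_singleton {ω : ℂ} (hω : ω.im ≠ 0) :
    Dense (Subfield.closure {ω} : Set ℂ) := by
  let f : ℝ × ℝ → ℂ := fun p => p.1 + p.2 * ω
  have hf : Function.Surjective f := fun z => ⟨(z.re - z.im / ω.im * ω.re, z.im / ω.im), by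
    apply Complex.ext <;> simp [f]; field_simp⟩
  have hrat : DenseRange fun q : ℚ × ℚ => f (q.1, q.2) :=
    hf.denseRange.comp (Rat.denseRange_cast.prodMap Rat.denseRange_cast) (by fun_prop)
  refine Dense.mono ?_ hrat
  rintro _ ⟨q, rfl⟩
  simp only [f, Complex.ofReal_ratCast]
  exact add_mem (SubfieldClass.ratCast_mem _ q.1)
    (mul_mem (SubfieldClass.ratCast_mem _ q.2) (Subfield.subset_closure rfl))

lemma exists_pow_mem_of_dense {K U W : Set ℂ} (hK : Dense K) (hU : IsOpen U) (hUne : U.Nonempty)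
    (hW : IsOpen W) (hW1 : 1 ∈ W) : ∃ w ∈ K ∩ W, ∃ n : ℕ, w ^ n ∈ U := by
  obtain ⟨t, htU, ht0⟩ := (dense_compl_singleton (0 : ℂ)).inter_open_nonempty U hU hUne
  have hroot : Tendsto (fun n : ℕ => t ^ (n : ℂ)⁻¹) atTop (𝓝 1) := by
    simpa [Function.comp_def] using ((continuousAt_const_cpow ht0).tendsto.comp
      (tendsto_inv_atTop_nhds_zero_nat (𝕜 := ℂ)))
  obtain ⟨n, hnW, hn0⟩ := ((hroot.eventually (hW.mem_nhds hW1)).and (eventually_ne_atTop 0)).exists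
  obtain ⟨w, ⟨hwW, hwU⟩, hwK⟩ := hK.inter_open_nonempty (W ∩ (· ^ n) ⁻¹' U)
    (hW.inter (hU.preimage (continuous_pow n)))
    ⟨_, hnW, by simpa [Complex.cpow_nat_inv_pow _ hn0] using htU⟩
  exact ⟨w, ⟨hwK, hwW⟩, n, hwU⟩

/-- Multipliers `t` preserving the colour `S` on the multiples of a denominator `b` of `t`, where
multiplication by `t` stays inside `R`. -/
def colourStabilizer (R : Subring ℂ) (S : Set ℂ) : Submonoid ℂ where
  carrier := {t | t ≠ 0 ∧ ∃ b ∈ R, b ≠ 0 ∧ b * t ∈ R ∧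
    ∀ x ∈ R, x ≠ 0 → x * b ∈ S → x * (b * t) ∈ S}
  one_mem' := ⟨one_ne_zero, 1, R.one_mem, one_ne_zero, by simp,
    fun x _ _ hx => by simpa using hx⟩
  mul_mem' := by
    rintro s t ⟨hs0, b, hb, hb0, hbs, hs⟩ ⟨ht0, c, hc, hc0, hct, ht⟩
    refine ⟨mul_ne_zero hs0 ht0, b * c, R.mul_mem hb hc, mul_ne_zero hb0 hc0, ?_,
      fun x hx hx0 hxbc => ?_⟩
    · rw [mul_mul_mul_comm]
      exact R.mul_mem hbs hct
    · have h₁ := hs (x * c) (R.mul_mem hx hc) (mul_ne_zero hx0 hc0)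
        (by rwa [mul_assoc, mul_comm c])
      have h₂ := ht (x * (b * s)) (R.mul_mem hx hbs) (mul_ne_zero hx0 (mul_ne_zero hb0 hs0))
        (by rwa [mul_right_comm])
      convert h₂ using 1
      ring

section Colouring

variable {R : Subring ℂ} {C D U V : Set ℂ}

lemma mem_of_mem_of_div_mem (hCD : ∀ x ∈ R, x ≠ 0 → x ∈ C ∨ x ∈ D)
    (hCU : Disjoint (quotientSet C) U) {a b : ℂ} (ha : a ∈ C) (ha0 : a ≠ 0) (hb : b ∈ R)
    (hb0 : b ≠ 0) (hab : a / b ∈ U ∨ b / a ∈ U) : b ∈ D := by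
  refine (hCD b hb hb0).resolve_left fun hbC => ?_
  rcases hab with h | h
  · exact Set.disjoint_left.1 hCU ⟨a, ha, b, hbC, hb0, rfl⟩ h
  · exact Set.disjoint_left.1 hCU ⟨b, hbC, a, ha, ha0, rfl⟩ h

lemma div_mem_colourStabilizer (hCD : ∀ x ∈ R, x ≠ 0 → x ∈ C ∨ x ∈ D)
    (hCU : Disjoint (quotientSet C) U) (hDV : Disjoint (quotientSet D) V) {b m c : ℂ}
    (hb : b ∈ R) (hm : m ∈ R) (hc : c ∈ R) (hb0 : b ≠ 0) (hm0 : m ≠ 0) (hc0 : c ≠ 0)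
    (hbm : b / m ∈ U ∨ m / b ∈ U) (hmc : m / c ∈ V ∨ c / m ∈ V) :
    c / b ∈ colourStabilizer R C := by
  refine ⟨div_ne_zero hc0 hb0, b, hb, hb0, by rwa [mul_div_cancel₀ _ hb0],
    fun x hx hx0 hxb => ?_⟩
  rw [mul_div_cancel₀ _ hb0]
  have hxm : x * m ∈ D := mem_of_mem_of_div_mem hCD hCU hxb (mul_ne_zero hx0 hb0)
    (R.mul_mem hx hm) (mul_ne_zero hx0 hm0) (by rwa [mul_div_mul_left _ _ hx0,
      mul_div_mul_left _ _ hx0])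
  exact mem_of_mem_of_div_mem (fun y hy hy0 => (hCD y hy hy0).symm) hDV hxm
    (mul_ne_zero hx0 hm0) (R.mul_mem hx hc) (mul_ne_zero hx0 hc0)
    (by rwa [mul_div_mul_left _ _ hx0, mul_div_mul_left _ _ hx0])

lemma exists_div_eq_of_mem_subfieldClosure {x : ℂ} (hx : x ∈ Subfield.closure (R : Set ℂ))
    (hx0 : x ≠ 0) : ∃ p ∈ R, ∃ q ∈ R, p ≠ 0 ∧ q ≠ 0 ∧ p / q = x := by
  obtain ⟨p, hp, q, hq, rfl⟩ := Subfield.mem_closure_iff.1 hx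
  rw [Subring.closure_eq] at hp hq
  exact ⟨p, hp, q, hq, (div_ne_zero_iff.1 hx0).1, (div_ne_zero_iff.1 hx0).2, rfl⟩

lemma mul_and_inv_mem_colourStabilizer (hCD : ∀ x ∈ R, x ≠ 0 → x ∈ C ∨ x ∈ D)
    (hCU : Disjoint (quotientSet C) U) (hDV : Disjoint (quotientSet D) V) {ρ σ : ℂ}
    (hρ : ρ ∈ Subfield.closure (R : Set ℂ)) (hρ0 : ρ ≠ 0) (hρU : ρ ∈ U)
    (hσ : σ ∈ Subfield.closure (R : Set ℂ)) (hσ0 : σ ≠ 0) (hσV : σ ∈ V) :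
    ρ * σ ∈ colourStabilizer R C ∧ (ρ * σ)⁻¹ ∈ colourStabilizer R C := by
  obtain ⟨p, hp, q, hq, hp0, hq0, rfl⟩ := exists_div_eq_of_mem_subfieldClosure hρ hρ0
  obtain ⟨r, hr, s, hs, hr0, hs0, rfl⟩ := exists_div_eq_of_mem_subfieldClosure hσ hσ0
  rw [div_mul_div_comm, inv_div]
  constructor
  · exact div_mem_colourStabilizer hCD hCU hDV (R.mul_mem hq hs) (R.mul_mem hp hs)
      (R.mul_mem hp hr) (mul_ne_zero hq0 hs0) (mul_ne_zero hp0 hs0) (mul_ne_zero hp0 hr0)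
      (.inr (by rwa [mul_div_mul_right _ _ hs0])) (.inr (by rwa [mul_div_mul_left _ _ hp0]))
  · exact div_mem_colourStabilizer hCD hCU hDV (R.mul_mem hp hr) (R.mul_mem hq hr)
      (R.mul_mem hq hs) (mul_ne_zero hp0 hr0) (mul_ne_zero hq0 hr0) (mul_ne_zero hq0 hs0)
      (.inl (by rwa [mul_div_mul_right _ _ hr0])) (.inl (by rwa [mul_div_mul_left _ _ hq0]))

lemma exists_mem_colourStabilizer_inter (hK : Dense (Subfield.closure (R : Set ℂ) : Set ℂ))
    (hCD : ∀ x ∈ R, x ≠ 0 → x ∈ C ∨ x ∈ D) (hCU : Disjoint (quotientSet C) U)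
    (hDV : Disjoint (quotientSet D) V) (hU : IsOpen U) (hUne : U.Nonempty) (hV : IsOpen V)
    (hVne : V.Nonempty) : ∃ t ∈ colourStabilizer R C, t ∈ U := by
  obtain ⟨ρ, hρU, hρK, hρ0 : ρ ≠ 0⟩ := (hK.sdiff_singleton 0).inter_open_nonempty U hU hUne
  obtain ⟨σ, hσV, hσK, hσ0 : σ ≠ 0⟩ := (hK.sdiff_singleton 0).inter_open_nonempty V hV hVne
  obtain ⟨w, ⟨hwK, hσwV : σ * w ∈ V, hw0 : w ≠ 0⟩, n, hwnU⟩ := exists_pow_mem_of_dense hK hU hUne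
    ((hV.preimage (continuous_const_mul σ)).inter isOpen_compl_singleton)
    ⟨by simpa using hσV, one_ne_zero⟩
  have hw : w = ρ * (σ * w) * (ρ * σ)⁻¹ := by
    field_simp
  refine ⟨w ^ n, pow_mem ?_ n, hwnU⟩
  rw [hw]
  exact mul_mem (mul_and_inv_mem_colourStabilizer hCD hCU hDV hρK hρ0 hρU
      (mul_mem hσK hwK) (mul_ne_zero hσ0 hw0) hσwV).1
    (mul_and_inv_mem_colourStabilizer hCD hCU hDV hρK hρ0 hρU hσK hσ0 hσV).2

lemma false_of_mem_colourStabilizer (hCD : ∀ x ∈ R, x ≠ 0 → x ∈ C ∨ x ∈ D)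
    (hCU : Disjoint (quotientSet C) U) (hDV : Disjoint (quotientSet D) V) {t u : ℂ}
    (ht : t ∈ colourStabilizer R C) (htU : t ∈ U) (hu : u ∈ colourStabilizer R D)
    (huV : u ∈ V) : False := by
  obtain ⟨-, b, hb, hb0, -, hbt⟩ := ht
  obtain ⟨-, c, hc, hc0, -, hcu⟩ := hu
  rcases hCD (c * b) (R.mul_mem hc hb) (mul_ne_zero hc0 hb0) with h | h
  · refine Set.disjoint_left.1 hCU ⟨c * (b * t), hbt c hc hc0 h, c * b, h, mul_ne_zero hc0 hb0,
      ?_⟩ htU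
    rw [← mul_assoc, mul_div_cancel_left₀ _ (mul_ne_zero hc0 hb0)]
  · rw [mul_comm] at h
    refine Set.disjoint_left.1 hDV ⟨b * (c * u), hcu b hb hb0 h, b * c, h, mul_ne_zero hb0 hc0,
      ?_⟩ huV
    rw [← mul_assoc, mul_div_cancel_left₀ _ (mul_ne_zero hb0 hc0)]

end Colouring

lemma exists_isOpen_disjoint_of_not_dense {X : Type*} [TopologicalSpace X] {s : Set X}
    (h : ¬Dense s) : ∃ U, IsOpen U ∧ U.Nonempty ∧ Disjoint s U := by
  simpa [dense_iff_inter_open, Set.not_nonempty_iff_eq_empty, Set.disjoint_iff_inter_eq_empty,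
    Set.inter_comm] using h

theorem dense_quotientSet_or_dense_quotientSet (R : Subring ℂ)
    (hK : Dense (Subfield.closure (R : Set ℂ) : Set ℂ)) {C D : Set ℂ}
    (hCD : ∀ x ∈ R, x ≠ 0 → x ∈ C ∨ x ∈ D) : Dense (quotientSet C) ∨ Dense (quotientSet D) := by
  by_contra! h
  obtain ⟨U, hU, hUne, hCU⟩ := exists_isOpen_disjoint_of_not_dense h.1
  obtain ⟨V, hV, hVne, hDV⟩ := exists_isOpen_disjoint_of_not_dense h.2
  obtain ⟨t, ht, htU⟩ := exists_mem_colourStabilizer_inter hK hCD hCU hDV hU hUne hV hVne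
  obtain ⟨u, hu, huV⟩ := exists_mem_colourStabilizer_inter hK
    (fun x hx hx0 => (hCD x hx hx0).symm) hDV hCU hV hVne hU hUne
  exact false_of_mem_colourStabilizer hCD hCU hDV ht htU hu huV

theorem Ideal.dense_ratios_or_dense_ratios_of_union_eq {R : Subring ℂ}
    (hK : Dense (Subfield.closure (R : Set ℂ) : Set ℂ)) {𝔞 : Ideal R} (h𝔞 : 𝔞 ≠ ⊥)
    {C D : Set R} (hunion : C ∪ D = 𝔞) :
    Dense {z : ℂ | ∃ x ∈ C, ∃ y ∈ C, (y : ℂ) ≠ 0 ∧ z = x / y} ∨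
    Dense {z : ℂ | ∃ x ∈ D, ∃ y ∈ D, (y : ℂ) ≠ 0 ∧ z = x / y} := by
  obtain ⟨g, hg𝔞, hg0⟩ := Submodule.exists_mem_ne_zero_of_ne_bot h𝔞
  have hg0' : (g : ℂ) ≠ 0 := by exact_mod_cast hg0
  have hcover : ∀ x ∈ R, x ≠ 0 → x ∈ (· * (g : ℂ)) ⁻¹' (Subtype.val '' C) ∨
      x ∈ (· * (g : ℂ)) ⁻¹' (Subtype.val '' D) := by
    intro x hx _
    have hxg : ⟨x, hx⟩ * g ∈ C ∪ D := hunion ▸ 𝔞.mul_mem_left _ hg𝔞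
    rcases hxg with h | h
    exacts [.inl ⟨_, h, rfl⟩, .inr ⟨_, h, rfl⟩]
  have := (dense_quotientSet_or_dense_quotientSet R hK hcover).imp
    (·.mono (quotientSet_preimage_mul_subset hg0')) (·.mono (quotientSet_preimage_mul_subset hg0'))
  simpa only [quotientSet, Set.exists_mem_image] using this

theorem stmt_10_general (d : ℕ) (hd : 0 < d)
    (𝔞 : Ideal ↥(Subring.closure {((Real.sqrt d : ℂ) * Complex.I)}))
    (h𝔞 : 𝔞 ≠ ⊥)
    (C D : Set ↥(Subring.closure {((Real.sqrt d : ℂ) * Complex.I)}))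
    (hunion : C ∪ D = (𝔞 : Set ↥(Subring.closure {((Real.sqrt d : ℂ) * Complex.I)}))) :
    Dense {z : ℂ | ∃ x ∈ C, ∃ y ∈ C, (y : ℂ) ≠ 0 ∧ z = (x : ℂ) / (y : ℂ)} ∨
    Dense {z : ℂ | ∃ x ∈ D, ∃ y ∈ D, (y : ℂ) ≠ 0 ∧ z = (x : ℂ) / (y : ℂ)} :=
  Ideal.dense_ratios_or_dense_ratios_of_union_eq
    ((dense_subfieldClosure_singleton (by simpa using hd.ne')).mono
      (Subfield.closure_mono Subring.subset_closure)) h𝔞 hunion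

/-- Theorem 4: for a squarefree integer `d > 0` and a nonzero ideal `𝔞` of
`ℤ[√-d]` (realized as the subring of `ℂ` generated by `√d * I`), any
two-partition `𝔞 = C ∪ D` has at least one part fractionally dense in `ℂ`. -/
theorem stmt_10 (d : ℕ) (hd : 0 < d) (hsq : Squarefree d)
    (𝔞 : Ideal ↥(Subring.closure {((Real.sqrt d : ℂ) * Complex.I)}))
    (h𝔞 : 𝔞 ≠ ⊥)
    (C D : Set ↥(Subring.closure {((Real.sqrt d : ℂ) * Complex.I)}))
    (hunion : C ∪ D = (𝔞 : Set ↥(Subring.closure {((Real.sqrt d : ℂ) * Complex.I)})))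
    (hdisj : C ∩ D = ∅) :
    Dense {z : ℂ | ∃ x ∈ C, ∃ y ∈ C, (y : ℂ) ≠ 0 ∧ z = (x : ℂ) / (y : ℂ)} ∨
    Dense {z : ℂ | ∃ x ∈ D, ∃ y ∈ D, (y : ℂ) ≠ 0 ∧ z = (x : ℂ) / (y : ℂ)} :=
  stmt_10_general d hd 𝔞 h𝔞 C D hunion
end

section
/- Let d > 0 be a squarefree integer, let 𝔞 be a nonzero ideal of ℤ[√−d], and let C be a finite subset of 𝔞. Then 𝔞 \ C is fractionally dense in ℂ, i.e. the quotient set R(𝔞 \ C) = {x/y : x, y ∈ 𝔞 \ C, y ≠ 0} is dense in ℂ (under the embedding of ℤ[√−d] into ℂ sending a + b√−d to a + b√d·i). -/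
/-!
Every nonzero element of the fraction field of `ℤ[√-d]` is a ratio `x / y` of nonzero elements
of the ring; multiplying numerator and denominator by a common factor `c ∈ 𝔞` keeps the ratio and
puts both into `𝔞`, and since `𝔞` is infinite while only finitely many `c` send `x` or `y` into `C`,
such a `c` avoids `C`. The fraction field `ℚ(√-d)` is dense in `ℂ` because it contains the image
of `ℚ × ℚ` under the real-linear isomorphism `(u, v) ↦ u + v √-d` of `ℝ²` onto `ℂ`.
-/

theorem Ideal.exists_mul_mem_sdiff_of_finite {R : Type*} [CommRing R] [IsDomain R] [Infinite R]
    {I : Ideal R} (hI : I ≠ ⊥) {C : Set R} (hC : C.Finite) {x y : R} (hx : x ≠ 0) (hy : y ≠ 0) :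
    ∃ c ≠ 0, c * x ∈ (I : Set R) \ C ∧ c * y ∈ (I : Set R) \ C := by
  obtain ⟨a, ha, ha0⟩ := Submodule.exists_mem_ne_zero_of_ne_bot hI
  have hI_inf : (I : Set R).Infinite :=
    Set.infinite_of_injective_forall_mem (mul_left_injective₀ ha0) fun r => I.mul_mem_left r ha
  have hbad : ({0} ∪ (· * x) ⁻¹' C ∪ (· * y) ⁻¹' C).Finite :=
    ((Set.finite_singleton 0).union (hC.preimage (mul_left_injective₀ hx).injOn)).union
      (hC.preimage (mul_left_injective₀ hy).injOn)
  obtain ⟨c, hcI, hc⟩ := (hI_inf.sdiff hbad).nonempty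
  simp only [Set.mem_union, Set.mem_singleton_iff, Set.mem_preimage, not_or] at hc
  exact ⟨c, hc.1.1, ⟨I.mul_mem_right x hcI, hc.1.2⟩, ⟨I.mul_mem_right y hcI, hc.2⟩⟩

theorem Subfield.closure_sdiff_zero_subset_ratios {K : Type*} [Field K] [CharZero K] {s : Set K}
    {I : Ideal (Subring.closure s)} (hI : I ≠ ⊥) {C : Set (Subring.closure s)} (hC : C.Finite) :
    (Subfield.closure s : Set K) \ {0} ⊆
      {z | ∃ x ∈ (I : Set (Subring.closure s)) \ C, ∃ y ∈ (I : Set (Subring.closure s)) \ C,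
        (y : K) ≠ 0 ∧ z = x / y} := by
  rintro z ⟨hz, hz0 : z ≠ 0⟩
  obtain ⟨x, hx, y, hy, rfl⟩ := Subfield.mem_closure_iff.1 hz
  have hx0 : x ≠ 0 := by rintro rfl; simp at hz0
  have hy0 : y ≠ 0 := by rintro rfl; simp at hz0
  have : Infinite (Subring.closure s) := Infinite.of_injective _ Nat.cast_injective
  obtain ⟨c, hc0, hcx, hcy⟩ := I.exists_mul_mem_sdiff_of_finite hI hC
    (x := ⟨x, hx⟩) (y := ⟨y, hy⟩) (by simpa using hx0) (by simpa using hy0)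
  have hc0' : (c : K) ≠ 0 := by simpa using hc0
  refine ⟨_, hcx, _, hcy, by simp [hc0', hy0], ?_⟩
  simp only [Subring.coe_mul]
  exact (mul_div_mul_left x y hc0').symm

theorem Complex.dense_subfieldClosure_singleton {w : ℂ} (hw : w.im ≠ 0) :
    Dense (Subfield.closure {w} : Set ℂ) := by
  have hsurj : Function.Surjective fun p : ℝ × ℝ => (p.1 : ℂ) + p.2 * w := fun z =>
    ⟨(z.re - z.im / w.im * w.re, z.im / w.im), by apply Complex.ext <;> simp; field_simp⟩
  have hdense : DenseRange fun q : ℚ × ℚ => ((q.1 : ℝ) : ℂ) + ((q.2 : ℝ) : ℂ) * w :=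
    hsurj.denseRange.comp (Rat.denseRange_cast.prodMap Rat.denseRange_cast) (by fun_prop)
  refine hdense.mono (Set.range_subset_iff.2 fun q => ?_)
  simp only [Complex.ofReal_ratCast]
  exact add_mem (SubfieldClass.ratCast_mem _ _)
    (mul_mem (SubfieldClass.ratCast_mem _ _) (Subfield.subset_closure rfl))

theorem stmt_12_general (d : ℕ) (hd : 0 < d)
    (𝔞 : Ideal ↥(Subring.closure {((Real.sqrt d : ℂ) * Complex.I)}))
    (h𝔞 : 𝔞 ≠ ⊥)
    (C : Set ↥(Subring.closure {((Real.sqrt d : ℂ) * Complex.I)}))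
    (hC : C.Finite) :
    Dense {z : ℂ | ∃ x ∈ (𝔞 : Set ↥(Subring.closure {((Real.sqrt d : ℂ) * Complex.I)})) \ C,
      ∃ y ∈ (𝔞 : Set ↥(Subring.closure {((Real.sqrt d : ℂ) * Complex.I)})) \ C,
        (y : ℂ) ≠ 0 ∧ z = (x : ℂ) / (y : ℂ)} := by
  have him : ((Real.sqrt d : ℂ) * Complex.I).im ≠ 0 := by simpa using hd.ne'
  exact ((Complex.dense_subfieldClosure_singleton him).sdiff_singleton 0).mono
    (Subfield.closure_sdiff_zero_subset_ratios h𝔞 hC)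

/-- Removing a finite subset `C` from a nonzero ideal `𝔞` of `ℤ[√-d]`
(realized as the subring of `ℂ` generated by `√d * I`, with `d > 0` squarefree)
leaves a set that is fractionally dense in `ℂ`. -/
theorem stmt_12 (d : ℕ) (hd : 0 < d) (hsq : Squarefree d)
    (𝔞 : Ideal ↥(Subring.closure {((Real.sqrt d : ℂ) * Complex.I)}))
    (h𝔞 : 𝔞 ≠ ⊥)
    (C : Set ↥(Subring.closure {((Real.sqrt d : ℂ) * Complex.I)}))
    (hC : C.Finite)
    (hCsub : C ⊆ (𝔞 : Set ↥(Subring.closure {((Real.sqrt d : ℂ) * Complex.I)}))) :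
    Dense {z : ℂ | ∃ x ∈ (𝔞 : Set ↥(Subring.closure {((Real.sqrt d : ℂ) * Complex.I)})) \ C,
      ∃ y ∈ (𝔞 : Set ↥(Subring.closure {((Real.sqrt d : ℂ) * Complex.I)})) \ C,
        (y : ℂ) ≠ 0 ∧ z = (x : ℂ) / (y : ℂ)} :=
  stmt_12_general d hd 𝔞 h𝔞 C hC
end

section
/- Let S be a subset of ℂ such that every element z of S satisfies 3·5^k ≤ |z|² < 5^{k+1} for some integer k ≥ 0. Then S is not fractionally dense in ℂ; in fact, its quotient set R(S) contains no element z with 5/3 < |z|² < 9/5 (equivalently, R(S) misses the open annulus {z ∈ ℂ : (5/3)·5^ℓ < |z|² < (3/5)·5^{ℓ+1}} for every integer ℓ). -/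
lemma key15 (a b : ℝ) (k m : ℕ) (ℓ : ℤ)
    (h1 : 3 * 5 ^ k ≤ a) (h2 : a < 5 ^ (k + 1))
    (h3 : 3 * 5 ^ m ≤ b) (h4 : b < 5 ^ (m + 1)) (hb : 0 < b)
    (hA : 5 / 3 * (5 : ℝ) ^ ℓ < a / b)
    (hB : a / b < 3 / 5 * (5 : ℝ) ^ (ℓ + 1)) : False := by
  set A : ℝ := (5 : ℝ) ^ ℓ with hAdef
  have hApos : 0 < A := zpow_pos (by norm_num) ℓ
  have hA' : 5 / 3 * A * b < a := (lt_div_iff₀ hb).mp hA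
  have hE : (5 : ℝ) ^ (ℓ + 1) = 5 * A := by
    rw [zpow_add₀ (by norm_num : (5:ℝ) ≠ 0)]; ring
  have hB' : a < 3 * A * b := by
    have := (div_lt_iff₀ hb).mp hB
    rw [hE] at this; linarith
  have hk : (5:ℝ) ^ (k+1) = 5 * 5 ^ k := by ring
  have hm : (5:ℝ) ^ (m+1) = 5 * 5 ^ m := by ring
  have e1 : A * 5 ^ m < 5 ^ k := by
    nlinarith [mul_nonneg hApos.le (by linarith : (0:ℝ) ≤ b - 3 * 5 ^ m)]
  have e2 : (5:ℝ) ^ k < 5 * (A * 5 ^ m) := by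
    nlinarith [mul_pos hApos (by linarith : (0:ℝ) < 5 * 5 ^ m - b)]
  have z1 : (5:ℝ) ^ (ℓ + (m:ℤ)) < (5:ℝ) ^ (k:ℤ) := by
    rw [zpow_add₀ (by norm_num : (5:ℝ) ≠ 0), zpow_natCast, zpow_natCast]
    exact e1
  have z2 : (5:ℝ) ^ (k:ℤ) < (5:ℝ) ^ (ℓ + (m:ℤ) + 1) := by
    rw [zpow_add₀ (by norm_num : (5:ℝ) ≠ 0), zpow_add₀ (by norm_num : (5:ℝ) ≠ 0),
      zpow_natCast, zpow_natCast, zpow_one]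
    nlinarith
  have i1 : ℓ + (m:ℤ) < (k:ℤ) := by
    have := (zpow_lt_zpow_iff_right₀ (by norm_num : (1:ℝ) < 5)).mp z1
    exact this
  have i2 : (k:ℤ) < ℓ + (m:ℤ) + 1 := by
    exact (zpow_lt_zpow_iff_right₀ (by norm_num : (1:ℝ) < 5)).mp z2
  omega

/-- If every `z ∈ S` satisfies `3·5^k ≤ |z|² < 5^(k+1)` for some `k ≥ 0`, then
`S` is not fractionally dense in `ℂ`: its quotient set contains no element `w`
with `5/3 < |w|² < 9/5`; indeed it misses the open annulus
`(5/3)·5^ℓ < |w|² < (3/5)·5^(ℓ+1)` for every integer `ℓ`. -/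
theorem stmt_15 (S : Set ℂ)
    (hS : ∀ z ∈ S, ∃ k : ℕ,
      3 * 5 ^ k ≤ Complex.normSq z ∧ Complex.normSq z < 5 ^ (k + 1)) :
    ¬ Dense {w : ℂ | ∃ x ∈ S, ∃ y ∈ S, y ≠ 0 ∧ w = x / y} ∧
    (∀ w ∈ {w : ℂ | ∃ x ∈ S, ∃ y ∈ S, y ≠ 0 ∧ w = x / y},
      ¬ (5 / 3 < Complex.normSq w ∧ Complex.normSq w < 9 / 5)) ∧
    (∀ ℓ : ℤ, ∀ w ∈ {w : ℂ | ∃ x ∈ S, ∃ y ∈ S, y ≠ 0 ∧ w = x / y},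
      ¬ (5 / 3 * (5 : ℝ) ^ ℓ < Complex.normSq w ∧
          Complex.normSq w < 3 / 5 * (5 : ℝ) ^ (ℓ + 1))) := by
  have hmain : ∀ ℓ : ℤ, ∀ w ∈ {w : ℂ | ∃ x ∈ S, ∃ y ∈ S, y ≠ 0 ∧ w = x / y},
      ¬ (5 / 3 * (5 : ℝ) ^ ℓ < Complex.normSq w ∧
          Complex.normSq w < 3 / 5 * (5 : ℝ) ^ (ℓ + 1)) := by
    rintro ℓ w ⟨x, hx, y, hy, hy0, rfl⟩ ⟨hlo, hhi⟩
    obtain ⟨k, hk1, hk2⟩ := hS x hx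
    obtain ⟨m, hm1, hm2⟩ := hS y hy
    have hb : 0 < Complex.normSq y := Complex.normSq_pos.mpr hy0
    rw [map_div₀] at hlo hhi
    exact key15 _ _ k m ℓ hk1 hk2 hm1 hm2 hb hlo hhi
  have hsecond : ∀ w ∈ {w : ℂ | ∃ x ∈ S, ∃ y ∈ S, y ≠ 0 ∧ w = x / y},
      ¬ (5 / 3 < Complex.normSq w ∧ Complex.normSq w < 9 / 5) := by
    intro w hw ⟨h1, h2⟩
    refine hmain 0 w hw ⟨?_, ?_⟩ <;> norm_num <;> linarith
  refine ⟨?_, hsecond, hmain⟩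
  intro hD
  set T := {w : ℂ | ∃ x ∈ S, ∃ y ∈ S, y ≠ 0 ∧ w = x / y}
  have hUopen : IsOpen {w : ℂ | 5 / 3 < Complex.normSq w ∧ Complex.normSq w < 9 / 5} := by
    have : {w : ℂ | 5 / 3 < Complex.normSq w ∧ Complex.normSq w < 9 / 5}
        = Complex.normSq ⁻¹' (Set.Ioo (5/3) (9/5)) := rfl
    rw [this]
    exact (isOpen_Ioo).preimage Complex.continuous_normSq
  have hw0 : ((13/10 : ℝ) : ℂ) ∈ {w : ℂ | 5 / 3 < Complex.normSq w ∧ Complex.normSq w < 9 / 5} := by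
    simp only [Set.mem_setOf_eq, Complex.normSq_ofReal]
    norm_num
  obtain ⟨t, htU, htT⟩ := hD.exists_mem_open hUopen ⟨_, hw0⟩
  exact hsecond t htU htT
end

section
/- Let d = 1 or d = 2. Then there exists an infinite set A of prime elements of ℤ[√−d] which is not fractionally dense in ℂ, i.e. whose quotient set R(A) = {x/y : x, y ∈ A} is not dense in ℂ (under the embedding of ℤ[√−d] into ℂ sending a + b√−d to a + b√d·i). -/
/-!
Rational primes `p ≡ 7 (mod 8)` are infinitely many (Dirichlet), and since neither `-1` nor `-2`
is a square modulo such `p`, they stay prime in `ℤ[i]` and in `ℤ[√-2]`: if `p ∣ N(z) = a² + d b²`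
then `p ∣ b` (else `-d ≡ (a/b)²`) and hence `p ∣ a`. Their quotients are real, so they all lie in
the closed line `ℝ ⊊ ℂ`.
-/

namespace Zsqrtd

variable {d : ℤ}

theorem intCast_dvd_of_dvd_norm {p : ℕ} [Fact p.Prime] (hd : ¬IsSquare (d : ZMod p))
    {z : ℤ√d} (h : (p : ℤ) ∣ z.norm) : ((p : ℤ) : ℤ√d) ∣ z := by
  have hnorm : (z.re : ZMod p) * z.re - d * z.im * z.im = 0 := by
    simpa [norm_def, ZMod.intCast_zmod_eq_zero_iff_dvd] using
      (ZMod.intCast_zmod_eq_zero_iff_dvd _ p).mpr h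
  have him : (z.im : ZMod p) = 0 := by
    by_contra him
    exact hd ⟨z.re / z.im, by field_simp; linear_combination -hnorm⟩
  have hre : (z.re : ZMod p) = 0 := by
    simpa [him] using hnorm
  rw [intCast_dvd]
  exact ⟨(ZMod.intCast_zmod_eq_zero_iff_dvd _ p).mp hre,
    (ZMod.intCast_zmod_eq_zero_iff_dvd _ p).mp him⟩

theorem prime_intCast_of_not_isSquare {p : ℕ} [hp : Fact p.Prime]
    (hd : ¬IsSquare (d : ZMod p)) : Prime ((p : ℤ) : ℤ√d) := by
  refine ⟨?_, ?_, fun a b hab => ?_⟩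
  · simp [hp.out.ne_zero]
  · rw [← norm_eq_one_iff, norm_intCast, Int.natAbs_mul, Int.natAbs_natCast]
    exact fun h => hp.out.one_lt.ne' (Nat.eq_one_of_mul_eq_one_right h)
  · have hnorm : (p : ℤ) ∣ a.norm * b.norm := by
      obtain ⟨c, hc⟩ := hab
      refine ⟨p * c.norm, ?_⟩
      rw [← norm_mul, hc, norm_mul, norm_intCast, mul_assoc]
    exact (Nat.prime_iff_prime_int.mp hp.out).dvd_or_dvd hnorm |>.imp
      (intCast_dvd_of_dvd_norm hd) (intCast_dvd_of_dvd_norm hd)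

variable {R : Type*} [CommRing R]

theorem range_lift (r : {r : R // r * r = d}) : (lift r).range = Subring.closure {r.1} := by
  refine _root_.le_antisymm ?_ (Subring.closure_le.mpr ?_)
  · rintro _ ⟨z, rfl⟩
    exact add_mem (intCast_mem _ z.re)
      (mul_mem (intCast_mem _ z.im) (Subring.subset_closure rfl))
  · rintro _ rfl
    exact ⟨sqrtd, by simp⟩

noncomputable def liftEquivClosure [CharZero R] (r : {r : R // r * r = d})
    (hd : ∀ n : ℤ, d ≠ n * n) : ℤ√d ≃+* Subring.closure {r.1} :=
  (RingEquiv.ofLeftInverse (Function.leftInverse_invFun (lift_injective r hd))).trans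
    (RingEquiv.subringCongr (range_lift r))

@[simp]
theorem coe_liftEquivClosure_apply [CharZero R] (r : {r : R // r * r = d})
    (hd : ∀ n : ℤ, d ≠ n * n) (z : ℤ√d) : (liftEquivClosure r hd z : R) = lift r z :=
  rfl

end Zsqrtd

theorem Complex.not_dense_of_subset_range_ofReal {s : Set ℂ} (hs : s ⊆ Set.range ofReal) :
    ¬Dense s := fun h => by
  have := (h.mono hs).closure_eq
  rw [isometry_ofReal.isClosedEmbedding.isClosed_range.closure_eq] at this
  obtain ⟨x, hx⟩ := this.symm ▸ Set.mem_univ I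
  simpa using congrArg im hx

open Complex

theorem Complex.sqrt_mul_I_mul_self {x : ℝ} (hx : 0 ≤ x) :
    ((√x : ℂ) * I) * ((√x : ℂ) * I) = -x := by
  rw [mul_mul_mul_comm, ← ofReal_mul, Real.mul_self_sqrt hx, I_mul_I, mul_neg_one]

theorem ZMod.not_isSquare_neg_one_and_neg_two {p : ℕ} [Fact p.Prime] (hp : p % 8 = 7) :
    ¬IsSquare (-1 : ZMod p) ∧ ¬IsSquare (-2 : ZMod p) := by
  rw [ZMod.exists_sq_eq_neg_one_iff, ZMod.exists_sq_eq_neg_two_iff (by omega)]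
  omega

/-- Theorem 6: for `d = 1` or `d = 2`, there is an infinite set `A` of prime
elements of `ℤ[√-d]` (realized as the subring of `ℂ` generated by `√d * I`)
which is not fractionally dense in `ℂ`. -/
theorem stmt_16 (d : ℕ) (hd : d = 1 ∨ d = 2) :
    ∃ A : Set ↥(Subring.closure {((Real.sqrt d : ℂ) * Complex.I)}),
      A.Infinite ∧ (∀ α ∈ A, Prime α) ∧
      ¬ Dense {z : ℂ | ∃ x ∈ A, ∃ y ∈ A, (y : ℂ) ≠ 0 ∧ z = (x : ℂ) / (y : ℂ)} := by
  have hsq (n : ℤ) : -(d : ℤ) ≠ n * n := by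
    have : (0 : ℤ) < d := by omega
    nlinarith [mul_self_nonneg n]
  let e := Zsqrtd.liftEquivClosure
    ⟨(√d : ℂ) * I, by simpa using sqrt_mul_I_mul_self d.cast_nonneg⟩ hsq
  have he (p : ℕ) : (e (p : ℤ) : ℂ) = p := by simp [e]
  refine ⟨(fun p : ℕ => e (p : ℤ)) '' {p | p.Prime ∧ (p : ZMod 8) = 7}, ?_, ?_, ?_⟩
  · refine (Nat.infinite_setOfPred_prime_and_eq_mod (by decide)).image fun p _ q _ hpq => ?_
    exact_mod_cast (he p).symm.trans ((congrArg _ hpq).trans (he q))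
  · rintro _ ⟨p, ⟨hp, hp7⟩, rfl⟩
    have := Fact.mk hp
    have hp8 : p % 8 = 7 := by rw [← ZMod.val_natCast, hp7]; rfl
    refine (MulEquiv.prime_iff e.toMulEquiv).mpr (Zsqrtd.prime_intCast_of_not_isSquare ?_)
    rcases hd with rfl | rfl
    · simpa using (ZMod.not_isSquare_neg_one_and_neg_two hp8).1
    · simpa using (ZMod.not_isSquare_neg_one_and_neg_two hp8).2
  · refine Complex.not_dense_of_subset_range_ofReal ?_
    rintro _ ⟨_, ⟨p, _, rfl⟩, _, ⟨q, _, rfl⟩, _, rfl⟩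
    exact ⟨p / q, by simp⟩
end

section
/- Let b ≥ 2 be an integer and let a, c be integers with 1 ≤ a < c ≤ b and a·b < c². Then the union over all integers k ∈ ℤ of the intervals [a·b^k/c, c·b^k) equals the set (0, ∞) of all positive real numbers. -/
/-- Claim 1 in the proof of Theorem 1: if `1 ≤ a < c ≤ b`, `2 ≤ b` and
`a*b < c²`, then `⋃_{k ∈ ℤ} [a·b^k/c, c·b^k) = (0, ∞)`. -/
theorem stmt_18 (a b c : ℕ) (hb : 2 ≤ b) (ha : 1 ≤ a) (hac : a < c) (hcb : c ≤ b)
    (h : a * b < c ^ 2) :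
    (⋃ k : ℤ, Set.Ico ((a : ℝ) * (b : ℝ) ^ k / (c : ℝ)) ((c : ℝ) * (b : ℝ) ^ k)) =
      Set.Ioi (0 : ℝ) := by
  have hb1 : (1 : ℝ) < (b : ℝ) := by exact_mod_cast lt_of_lt_of_le one_lt_two hb
  have ha0 : (0 : ℝ) < (a : ℝ) := by exact_mod_cast ha
  have hc0 : (0 : ℝ) < (c : ℝ) := by exact_mod_cast lt_of_le_of_lt (Nat.zero_le a) hac
  have habc : (a : ℝ) * (b : ℝ) < (c : ℝ) ^ 2 := by exact_mod_cast h
  ext x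
  simp only [Set.mem_iUnion, Set.mem_Ico, Set.mem_Ioi]
  constructor
  · rintro ⟨k, h1, h2⟩
    have hpos : 0 < (a : ℝ) * (b : ℝ) ^ k / (c : ℝ) := by positivity
    linarith
  · intro hx
    obtain ⟨n, hn1, hn2⟩ := exists_mem_Ico_zpow (div_pos hx hc0) hb1
    have hbn : (0 : ℝ) < (b : ℝ) ^ n := by positivity
    have h1 : (c : ℝ) * (b : ℝ) ^ n ≤ x := by
      have := (le_div_iff₀ hc0).mp hn1
      linarith [this]
    have h2 : x < (c : ℝ) * (b : ℝ) ^ (n + 1) := by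
      have := (div_lt_iff₀ hc0).mp hn2
      linarith [this]
    refine ⟨n + 1, ?_, h2⟩
    have hz : (b : ℝ) ^ (n + 1) = (b : ℝ) ^ n * (b : ℝ) := by
      rw [zpow_add₀ (by linarith : (b:ℝ) ≠ 0), zpow_one]
    rw [div_le_iff₀ hc0, hz]
    nlinarith [hbn, habc, h1]
end
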